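/- arXiv:1508.04351 — 5 statements merged into one kernel-verified Lean document; each statement's English description precedes it below -/
import Mathlib

section
/- Let S be a nonnegative integrable random variable on a probability space with m := 1 − E[S] satisfying 0 ≤ m < 1, and fix T > 0. Then for every x ∈ ℝ there exists a unique σ ∈ [0,∞) such that P_BS(x,σ) = E[(e^x − S)₊]; that is, the Put-implied volatility I_S^p(x) is well defined on the whole real line. -/
open MeasureTheory Filter

/-- Standard normal cumulative distribution function. -/
noncomputable def stdNormalCDF (y : ℝ) : ℝ :=
  ∫ t in Set.Iic y, Real.exp (-t ^ 2 / 2) / Real.sqrt (2 * Real.pi)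

/-- Black-Scholes d₊ (maturity `T`, log-strike `x`, volatility `σ`). -/
noncomputable def dplus (T x σ : ℝ) : ℝ := -x / (σ * Real.sqrt T) + σ * Real.sqrt T / 2

/-- Black-Scholes d₋ (maturity `T`, log-strike `x`, volatility `σ`). -/
noncomputable def dminus (T x σ : ℝ) : ℝ := -x / (σ * Real.sqrt T) - σ * Real.sqrt T / 2

/-- Black-Scholes Call price (maturity `T`, log-strike `x`, volatility `σ`),
with the convention `CBS T x 0 = max (1 - exp x) 0`. -/
noncomputable def CBS (T x σ : ℝ) : ℝ :=
  if σ = 0 then max (1 - Real.exp x) 0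
  else stdNormalCDF (dplus T x σ) - Real.exp x * stdNormalCDF (dminus T x σ)

/-- Black-Scholes Put price (maturity `T`, log-strike `x`, volatility `σ`),
with the convention `PBS T x 0 = max (exp x - 1) 0`. -/
noncomputable def PBS (T x σ : ℝ) : ℝ :=
  if σ = 0 then max (Real.exp x - 1) 0
  else Real.exp x * stdNormalCDF (-dminus T x σ) - stdNormalCDF (-dplus T x σ)


/-!
For `σ > 0` the put price is `e^x N(u + v) - N(u - v)` with `u = x / (σ√T)`, `v = σ√T / 2`, and
`e^x φ(u + v) = φ(u - v)` collapses its σ-derivative (the vega) to `√T φ(u - v) > 0`. Hence `PBS T x`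
is strictly increasing and continuous on `[0, ∞)`, from `(e^x - 1)₊` at `σ = 0` to `e^x` at infinity.
The target `E[(e^x - S)₊]` lies in that range: it is at least `(e^x - E S)₊ ≥ (e^x - 1)₊` by Jensen,
and it equals `e^x - E[min(S, e^x)] < e^x` because `min(S, e^x)` has the support of `S` and `E S > 0`.
The intermediate value theorem concludes.
-/

open Set Topology ProbabilityTheory Real

local notation "φ" => gaussianPDFReal 0 1

lemma gaussianPDFReal_zero_one (t : ℝ) : φ t = exp (-t ^ 2 / 2) / √(2 * π) := by
  simp [gaussianPDFReal, div_eq_inv_mul]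

lemma exp_mul_gaussianPDFReal_zero_one_add (u v : ℝ) :
    exp (2 * u * v) * φ (u + v) = φ (u - v) := by
  rw [gaussianPDFReal_zero_one, gaussianPDFReal_zero_one, mul_div_assoc', ← exp_add]
  ring_nf

lemma stdNormalCDF_eq_integral (y : ℝ) : stdNormalCDF y = ∫ t in Iic y, φ t := by
  simp only [stdNormalCDF, gaussianPDFReal_zero_one]

lemma stdNormalCDF_eq_cdf : stdNormalCDF = cdf (gaussianReal 0 1) := by
  ext y
  rw [cdf_eq_real, Measure.real, gaussianReal_apply_eq_integral 0 one_ne_zero,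
    ENNReal.toReal_ofReal (setIntegral_nonneg measurableSet_Iic
      fun t _ => gaussianPDFReal_nonneg 0 1 t), stdNormalCDF_eq_integral]

lemma hasDerivAt_stdNormalCDF (y : ℝ) : HasDerivAt stdNormalCDF (φ y) y := by
  have hφ : Continuous φ := by
    unfold gaussianPDFReal; fun_prop
  have hint := integrable_gaussianPDFReal 0 1
  have hFTC : HasDerivAt (fun u => stdNormalCDF 0 + ∫ t in (0 : ℝ)..u, φ t) (φ y) y :=
    (intervalIntegral.integral_hasDerivAt_right hint.intervalIntegrable
      (hφ.stronglyMeasurableAtFilter _ _) hφ.continuousAt).const_add _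
  refine hFTC.congr_of_eventuallyEq (Filter.Eventually.of_forall fun u => ?_)
  dsimp only
  rw [stdNormalCDF_eq_integral, stdNormalCDF_eq_integral,
    ← intervalIntegral.integral_Iic_sub_Iic hint.integrableOn hint.integrableOn]
  ring

lemma continuous_stdNormalCDF : Continuous stdNormalCDF :=
  continuous_iff_continuousAt.2 fun y => (hasDerivAt_stdNormalCDF y).continuousAt

lemma tendsto_stdNormalCDF_atTop : Tendsto stdNormalCDF atTop (𝓝 1) :=
  stdNormalCDF_eq_cdf ▸ tendsto_cdf_atTop _

lemma tendsto_stdNormalCDF_atBot : Tendsto stdNormalCDF atBot (𝓝 0) :=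
  stdNormalCDF_eq_cdf ▸ tendsto_cdf_atBot _

lemma PBS_eqOn_Ioi (T x : ℝ) :
    EqOn (PBS T x) (fun σ => exp x * stdNormalCDF (x / √T * σ⁻¹ + √T / 2 * σ)
      - stdNormalCDF (x / √T * σ⁻¹ - √T / 2 * σ)) (Ioi 0) := fun σ hσ => by
  rw [PBS, if_neg (ne_of_gt hσ), dminus, dplus]
  congr 3 <;> ring

lemma PBS_zero (T x : ℝ) : PBS T x 0 = max (exp x - 1) 0 := if_pos rfl

lemma hasDerivAt_PBS {T : ℝ} (hT : 0 < T) (x : ℝ) {σ : ℝ} (hσ : 0 < σ) :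
    HasDerivAt (PBS T x) (√T * φ (x / √T * σ⁻¹ - √T / 2 * σ)) σ := by
  have hu : HasDerivAt (fun σ => x / √T * σ⁻¹) (x / √T * -(σ ^ 2)⁻¹) σ :=
    (hasDerivAt_inv hσ.ne').const_mul _
  have hv : HasDerivAt (fun σ => √T / 2 * σ) (√T / 2) σ := by
    simpa using (hasDerivAt_id σ).const_mul (√T / 2)
  have hkey : exp x * φ (x / √T * σ⁻¹ + √T / 2 * σ) = φ (x / √T * σ⁻¹ - √T / 2 * σ) := by
    convert exp_mul_gaussianPDFReal_zero_one_add _ _ using 3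
    field_simp
  refine ((((hasDerivAt_stdNormalCDF _).comp σ (hu.add hv)).const_mul (exp x)).sub
    ((hasDerivAt_stdNormalCDF _).comp σ (hu.sub hv))).congr_of_eventuallyEq
    ((PBS_eqOn_Ioi T x).eventuallyEq_of_mem (Ioi_mem_nhds hσ)) |>.congr_deriv ?_
  simp only [Pi.add_apply, Pi.sub_apply]
  -- `2 u v = x` for `u = x / (σ √T)`, `v = σ √T / 2`, so both density terms equal `φ (u - v)`.
  rw [← mul_assoc, hkey]
  ring

lemma tendsto_PBS_nhdsGT_zero {T : ℝ} (hT : 0 < T) (x : ℝ) :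
    Tendsto (PBS T x) (𝓝[>] 0) (𝓝 (max (exp x - 1) 0)) := by
  refine Tendsto.congr' (PBS_eqOn_Ioi T x).eventuallyEq_nhdsWithin.symm ?_
  have hv : Tendsto (fun σ => √T / 2 * σ) (𝓝[>] 0) (𝓝 0) :=
    ((continuous_const_mul _).tendsto' 0 0 (mul_zero _)).mono_left nhdsWithin_le_nhds
  rcases lt_trichotomy x 0 with hx | rfl | hx
  · have hu : Tendsto (fun σ => x / √T * σ⁻¹) (𝓝[>] 0) atBot :=
      tendsto_inv_nhdsGT_zero.const_mul_atTop_of_neg (div_neg_of_neg_of_pos hx (sqrt_pos.2 hT))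
    rw [max_eq_right (by linarith [exp_lt_one_iff.2 hx])]
    simpa [← sub_eq_add_neg] using ((tendsto_stdNormalCDF_atBot.comp (hu.atBot_add hv)).const_mul (exp x)).sub
      (tendsto_stdNormalCDF_atBot.comp (hu.atBot_add hv.neg))
  · simp only [zero_div, zero_mul, zero_add, exp_zero, one_mul, sub_self, max_self]
    simpa using ((continuous_stdNormalCDF.tendsto _).comp hv).sub
      ((continuous_stdNormalCDF.tendsto _).comp hv.neg)
  · have hu : Tendsto (fun σ => x / √T * σ⁻¹) (𝓝[>] 0) atTop :=
      tendsto_inv_nhdsGT_zero.const_mul_atTop (div_pos hx (sqrt_pos.2 hT))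
    rw [max_eq_left (by linarith [one_lt_exp_iff.2 hx])]
    simpa [← sub_eq_add_neg] using ((tendsto_stdNormalCDF_atTop.comp (hu.atTop_add hv)).const_mul (exp x)).sub
      (tendsto_stdNormalCDF_atTop.comp (hu.atTop_add hv.neg))

lemma tendsto_PBS_atTop {T : ℝ} (hT : 0 < T) (x : ℝ) :
    Tendsto (PBS T x) atTop (𝓝 (exp x)) := by
  refine Tendsto.congr' ((PBS_eqOn_Ioi T x).eventuallyEq_of_mem (Ioi_mem_atTop 0)).symm ?_
  have hu : Tendsto (fun σ => x / √T * σ⁻¹) atTop (𝓝 0) := by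
    simpa using tendsto_inv_atTop_zero.const_mul (x / √T)
  have hv : Tendsto (fun σ => √T / 2 * σ) atTop atTop :=
    tendsto_id.const_mul_atTop (by positivity)
  simpa [← sub_eq_add_neg] using ((tendsto_stdNormalCDF_atTop.comp (hu.add_atTop hv)).const_mul (exp x)).sub
    (tendsto_stdNormalCDF_atBot.comp (hu.add_atBot (tendsto_neg_atTop_atBot.comp hv)))

lemma continuousOn_PBS {T : ℝ} (hT : 0 < T) (x : ℝ) : ContinuousOn (PBS T x) (Ici 0) := by
  intro σ hσ
  rcases (mem_Ici.1 hσ).eq_or_lt with rfl | hσ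
  · refine continuousWithinAt_Ioi_iff_Ici.1 ?_
    rw [ContinuousWithinAt, PBS_zero]
    exact tendsto_PBS_nhdsGT_zero hT x
  · exact (hasDerivAt_PBS hT x hσ).continuousAt.continuousWithinAt

lemma strictMonoOn_PBS {T : ℝ} (hT : 0 < T) (x : ℝ) : StrictMonoOn (PBS T x) (Ici 0) :=
  strictMonoOn_of_deriv_pos (convex_Ici 0) (continuousOn_PBS hT x) fun σ hσ => by
    rw [interior_Ici] at hσ
    rw [(hasDerivAt_PBS hT x hσ).deriv]
    exact mul_pos (sqrt_pos.2 hT) (gaussianPDFReal_pos 0 1 _ one_ne_zero)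

lemma StrictMonoOn.existsUnique_eq_of_tendsto_atTop {α β : Type*}
    [ConditionallyCompleteLinearOrder α] [TopologicalSpace α] [OrderTopology α] [DenselyOrdered α]
    [LinearOrder β] [TopologicalSpace β] [OrderTopology β]
    {f : α → β} {a : α} {l y : β} (hmono : StrictMonoOn f (Ici a))
    (hcont : ContinuousOn f (Ici a)) (hlim : Tendsto f atTop (𝓝 l)) (hay : f a ≤ y) (hyl : y < l) :
    ∃! σ, a ≤ σ ∧ f σ = y := by
  have : Nonempty α := ⟨a⟩
  obtain ⟨b, hyb, hab⟩ := ((hlim.eventually (eventually_gt_nhds hyl)).and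
    (eventually_ge_atTop a)).exists
  obtain ⟨σ, hσ, rfl⟩ := intermediate_value_Icc hab (hcont.mono Icc_subset_Ici_self) ⟨hay, hyb.le⟩
  exact ⟨σ, ⟨hσ.1, rfl⟩, fun τ ⟨hτ, hτσ⟩ => hmono.injOn hτ hσ.1 hτσ⟩

section PutPayoff

variable {Ω : Type*} [MeasurableSpace Ω] {μ : Measure Ω} [IsProbabilityMeasure μ] {S : Ω → ℝ}

lemma max_sub_integral_le_integral_max_sub (hS : Integrable S μ) (K : ℝ) :
    max (K - ∫ ω, S ω ∂μ) 0 ≤ ∫ ω, max (K - S ω) 0 ∂μ := by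
  refine max_le ?_ (integral_nonneg fun ω => le_max_right _ _)
  calc K - ∫ ω, S ω ∂μ = ∫ ω, (K - S ω) ∂μ := by
        rw [integral_sub (integrable_const K) hS, integral_const, smul_eq_mul, probReal_univ,
          one_mul]
    _ ≤ ∫ ω, max (K - S ω) 0 ∂μ :=
        integral_mono ((integrable_const K).sub hS) ((integrable_const K).sub hS).pos_part
          fun ω => le_max_left _ _

lemma integral_max_sub_lt (hS0 : ∀ ω, 0 ≤ S ω) (hS : Integrable S μ) (hpos : 0 < ∫ ω, S ω ∂μ)
    {K : ℝ} (hK : 0 < K) : ∫ ω, max (K - S ω) 0 ∂μ < K := by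
  have hmin : Integrable (fun ω => min (S ω) K) μ := hS.inf (integrable_const K)
  have hsupp : Function.support (fun ω => min (S ω) K) = Function.support S := by
    ext ω
    simp only [Function.mem_support]
    rcases le_total (S ω) K with h | h
    · rw [min_eq_left h]
    · rw [min_eq_right h]
      exact iff_of_true hK.ne' (hK.trans_le h).ne'
  have hmin_pos : 0 < ∫ ω, min (S ω) K ∂μ := by
    rw [integral_pos_iff_support_of_nonneg (fun ω => le_min (hS0 ω) hK.le) hmin, hsupp,
      ← integral_pos_iff_support_of_nonneg hS0 hS]
    exact hpos
  calc ∫ ω, max (K - S ω) 0 ∂μ = ∫ ω, (K - min (S ω) K) ∂μ := by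
        simp_rw [← max_sub_sub_left, sub_self]
    _ = K - ∫ ω, min (S ω) K ∂μ := by
        rw [integral_sub (integrable_const K) hmin, integral_const, smul_eq_mul, probReal_univ,
          one_mul]
    _ < K := by linarith

end PutPayoff

/-- the Put-implied volatility is well defined on the whole real line. -/
theorem put_implied_volatility_exists_unique
    {Ω : Type*} [MeasurableSpace Ω] (μ : Measure Ω) [IsProbabilityMeasure μ]
    (S : Ω → ℝ) (hS : ∀ ω, 0 ≤ S ω) (hSint : Integrable S μ)
    (m : ℝ) (hm : m = 1 - ∫ ω, S ω ∂μ) (hm0 : 0 ≤ m) (hm1 : m < 1)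
    (T : ℝ) (hT : 0 < T) (x : ℝ) :
    ∃! σ : ℝ, 0 ≤ σ ∧ PBS T x σ = ∫ ω, max (Real.exp x - S ω) 0 ∂μ := by
  refine (strictMonoOn_PBS hT x).existsUnique_eq_of_tendsto_atTop (continuousOn_PBS hT x)
    (tendsto_PBS_atTop hT x) ?_ (integral_max_sub_lt hS hSint (by linarith) (exp_pos x))
  calc PBS T x 0 = max (exp x - 1) 0 := PBS_zero T x
    _ ≤ max (exp x - ∫ ω, S ω ∂μ) 0 := by gcongr; linarith
    _ ≤ ∫ ω, max (exp x - S ω) 0 ∂μ := max_sub_integral_le_integral_max_sub hSint _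
end

section
/- Fix T > 0, let c ∈ (0,1) and let I : ℝ → (0,∞) be a function such that C_BS(x, I(x)) converges to c as x → ∞. Then d₊(x, I(x)) converges, as x → ∞, to the unique real number y with N(y) = c. -/
open MeasureTheory Filter

/-
Writing `N` for the standard normal distribution function and `φ = N'` for its density, the
identity `eˣ φ(d₋) = φ(d₊)` and the Mills-ratio bound `N(z) ≤ φ(z)/(-z)` for `z < 0` give
`eˣ N(d₋) ≤ φ(d₊)/(-d₋) ≤ φ(0)/√(2x)`, because `-d₋ = x/s + s/2 ≥ √(2x)` for every total
volatility `s = σ√T > 0`. Hence the put-like term `eˣ N(d₋)` of the call price vanishes as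
`x → ∞`, uniformly in the volatility, so `N(d₊(x, I(x))) → c`, and since `N` is strictly
increasing this forces `d₊(x, I(x)) → N⁻¹(c)`.
-/

open Set Topology

theorem StrictMono.tendsto_of_tendsto_comp {α β γ : Type*} [LinearOrder α] [TopologicalSpace α]
    [OrderTopology α] [LinearOrder β] [TopologicalSpace β] [OrderTopology β] {f : α → β}
    (hf : StrictMono f) {g : γ → α} {l : Filter γ} {a : α}
    (h : Tendsto (f ∘ g) l (𝓝 (f a))) : Tendsto g l (𝓝 a) :=
  tendsto_order.2
    ⟨fun _ hb => (h.eventually (lt_mem_nhds (hf hb))).mono fun _ hx => hf.lt_iff_lt.1 hx,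
     fun _ hb => (h.eventually (gt_mem_nhds (hf hb))).mono fun _ hx => hf.lt_iff_lt.1 hx⟩

noncomputable def stdNormalPDF (t : ℝ) : ℝ := Real.exp (-t ^ 2 / 2) / Real.sqrt (2 * Real.pi)

lemma stdNormalPDF_pos (t : ℝ) : 0 < stdNormalPDF t := by
  unfold stdNormalPDF
  positivity

lemma stdNormalPDF_le_stdNormalPDF_zero (t : ℝ) : stdNormalPDF t ≤ stdNormalPDF 0 := by
  unfold stdNormalPDF
  refine div_le_div_of_nonneg_right (Real.exp_le_exp.2 ?_) (Real.sqrt_nonneg _)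
  nlinarith [sq_nonneg t]

lemma integrable_stdNormalPDF : Integrable stdNormalPDF := by
  convert (integrable_exp_neg_mul_sq (b := 1 / 2) (by norm_num)).div_const
    (Real.sqrt (2 * Real.pi)) using 1
  ext t
  unfold stdNormalPDF
  ring_nf

lemma integrable_mul_stdNormalPDF : Integrable fun t => t * stdNormalPDF t := by
  convert (integrable_mul_exp_neg_mul_sq (b := 1 / 2) (by norm_num)).div_const
    (Real.sqrt (2 * Real.pi)) using 1
  ext t
  unfold stdNormalPDF
  ring_nf

lemma hasDerivAt_stdNormalPDF (t : ℝ) : HasDerivAt stdNormalPDF (-t * stdNormalPDF t) t := by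
  refine (((hasDerivAt_pow 2 t).fun_neg.div_const 2).exp.div_const _).congr_deriv ?_
  unfold stdNormalPDF
  norm_num
  ring

lemma integral_Iic_mul_stdNormalPDF (z : ℝ) :
    ∫ t in Iic z, t * stdNormalPDF t = -stdNormalPDF z := by
  have hderiv : ∀ t ∈ Iic z, HasDerivAt stdNormalPDF (-t * stdNormalPDF t) t :=
    fun t _ => hasDerivAt_stdNormalPDF t
  have hint : IntegrableOn (fun t => -t * stdNormalPDF t) (Iic z) := by
    simpa only [neg_mul] using integrable_mul_stdNormalPDF.fun_neg.integrableOn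
  have hlim := tendsto_zero_of_hasDerivAt_of_integrableOn_Iic hderiv hint
    integrable_stdNormalPDF.integrableOn
  have hftc := integral_Iic_of_hasDerivAt_of_tendsto' hderiv hint hlim
  simp only [neg_mul, integral_neg, sub_zero] at hftc
  linarith

lemma stdNormalCDF_sub_stdNormalCDF (a b : ℝ) :
    stdNormalCDF b - stdNormalCDF a = ∫ t in a..b, stdNormalPDF t :=
  intervalIntegral.integral_Iic_sub_Iic integrable_stdNormalPDF.integrableOn
    integrable_stdNormalPDF.integrableOn

lemma stdNormalCDF_strictMono : StrictMono stdNormalCDF := fun a b hab => by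
  have := intervalIntegral.intervalIntegral_pos_of_pos
    integrable_stdNormalPDF.intervalIntegrable stdNormalPDF_pos hab
  linarith [stdNormalCDF_sub_stdNormalCDF a b]

lemma stdNormalCDF_nonneg (z : ℝ) : 0 ≤ stdNormalCDF z :=
  setIntegral_nonneg measurableSet_Iic fun t _ => (stdNormalPDF_pos t).le

lemma stdNormalCDF_le_stdNormalPDF_div {z : ℝ} (hz : z < 0) :
    stdNormalCDF z ≤ stdNormalPDF z / -z :=
  calc stdNormalCDF z = ∫ t in Iic z, stdNormalPDF t := rfl
    _ ≤ ∫ t in Iic z, z⁻¹ * (t * stdNormalPDF t) := by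
        refine setIntegral_mono_on integrable_stdNormalPDF.integrableOn
          (integrable_mul_stdNormalPDF.const_mul _).integrableOn measurableSet_Iic fun t ht => ?_
        rw [← mul_assoc]
        refine le_mul_of_one_le_left (stdNormalPDF_pos t).le ?_
        rw [← div_eq_inv_mul, le_div_iff_of_neg hz, one_mul]
        exact ht
    _ = stdNormalPDF z / -z := by
        rw [integral_const_mul, integral_Iic_mul_stdNormalPDF, mul_neg, div_neg,
          inv_mul_eq_div]

section BlackScholes

variable {T x σ : ℝ}

lemma exp_mul_stdNormalPDF_dminus (hT : 0 < T) (hσ : 0 < σ) :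
    Real.exp x * stdNormalPDF (dminus T x σ) = stdNormalPDF (dplus T x σ) := by
  have hs : σ * Real.sqrt T ≠ 0 := (mul_pos hσ (Real.sqrt_pos.2 hT)).ne'
  unfold stdNormalPDF dplus dminus
  rw [← mul_div_assoc, ← Real.exp_add]
  congr 2
  field_simp
  ring

lemma sqrt_two_mul_le_neg_dminus (hT : 0 < T) (hσ : 0 < σ) (hx : 0 ≤ x) :
    Real.sqrt (2 * x) ≤ -dminus T x σ := by
  have hs : 0 < σ * Real.sqrt T := mul_pos hσ (Real.sqrt_pos.2 hT)
  have hneg : -dminus T x σ = x / (σ * Real.sqrt T) + σ * Real.sqrt T / 2 := by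
    unfold dminus
    ring
  rw [hneg, Real.sqrt_le_left (by positivity)]
  have := div_mul_cancel₀ x hs.ne'
  nlinarith [sq_nonneg (x / (σ * Real.sqrt T) - σ * Real.sqrt T / 2)]

lemma exp_mul_stdNormalCDF_dminus_le (hT : 0 < T) (hσ : 0 < σ) (hx : 0 < x) :
    Real.exp x * stdNormalCDF (dminus T x σ) ≤ stdNormalPDF 0 / Real.sqrt (2 * x) := by
  have hsqrt := sqrt_two_mul_le_neg_dminus hT hσ hx.le
  have hpos : 0 < Real.sqrt (2 * x) := Real.sqrt_pos.2 (by positivity)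
  calc Real.exp x * stdNormalCDF (dminus T x σ)
      ≤ Real.exp x * (stdNormalPDF (dminus T x σ) / -dminus T x σ) :=
        mul_le_mul_of_nonneg_left (stdNormalCDF_le_stdNormalPDF_div (by linarith))
          (Real.exp_pos x).le
    _ = stdNormalPDF (dplus T x σ) / -dminus T x σ := by
        rw [← mul_div_assoc, exp_mul_stdNormalPDF_dminus hT hσ]
    _ ≤ stdNormalPDF 0 / Real.sqrt (2 * x) :=
        div_le_div₀ (stdNormalPDF_pos 0).le (stdNormalPDF_le_stdNormalPDF_zero _) hpos hsqrt

lemma tendsto_exp_mul_stdNormalCDF_dminus (hT : 0 < T) {σ : ℝ → ℝ} (hσ : ∀ x, 0 < σ x) :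
    Tendsto (fun x => Real.exp x * stdNormalCDF (dminus T x (σ x))) atTop (𝓝 0) := by
  have hbound : Tendsto (fun x => stdNormalPDF 0 / Real.sqrt (2 * x)) atTop (𝓝 0) :=
    tendsto_const_nhds.div_atTop
      (Real.tendsto_sqrt_atTop.comp (tendsto_id.const_mul_atTop two_pos))
  refine tendsto_of_tendsto_of_tendsto_of_le_of_le' tendsto_const_nhds hbound
    (Eventually.of_forall fun x => ?_) ?_
  · exact mul_nonneg (Real.exp_pos x).le (stdNormalCDF_nonneg _)
  · filter_upwards [eventually_gt_atTop 0] with x hx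
    exact exp_mul_stdNormalCDF_dminus_le hT (hσ x) hx

lemma CBS_of_ne_zero (hσ : σ ≠ 0) :
    CBS T x σ = stdNormalCDF (dplus T x σ) - Real.exp x * stdNormalCDF (dminus T x σ) :=
  if_neg hσ

end BlackScholes

theorem dplus_limit_from_call_price_limit_general (T : ℝ) (hT : 0 < T)
    (c : ℝ)
    (I : ℝ → ℝ) (hIpos : ∀ x, 0 < I x)
    (hconv : Tendsto (fun x => CBS T x (I x)) atTop (nhds c))
    (y : ℝ) (hy : stdNormalCDF y = c) :
    Tendsto (fun x => dplus T x (I x)) atTop (nhds y) := by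
  have hcall := hconv.add (tendsto_exp_mul_stdNormalCDF_dminus hT hIpos)
  rw [add_zero, ← hy] at hcall
  refine stdNormalCDF_strictMono.tendsto_of_tendsto_comp (hcall.congr fun x => ?_)
  rw [CBS_of_ne_zero (hIpos x).ne', Function.comp_apply, sub_add_cancel]

/-- if `C_BS(x, I(x)) → c ∈ (0,1)` as `x → ∞`, then
`d₊(x, I(x)) → N⁻¹(c)`. -/
theorem dplus_limit_from_call_price_limit (T : ℝ) (hT : 0 < T)
    (c : ℝ) (hc0 : 0 < c) (hc1 : c < 1)
    (I : ℝ → ℝ) (hIpos : ∀ x, 0 < I x)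
    (hconv : Tendsto (fun x => CBS T x (I x)) atTop (nhds c))
    (y : ℝ) (hy : stdNormalCDF y = c) :
    Tendsto (fun x => dplus T x (I x)) atTop (nhds y) :=
  dplus_limit_from_call_price_limit_general T hT c I hIpos hconv y hy
end

section
/- Let (Ω, F, P) be a probability space, let M ≥ 0 be an integrable random variable with E_P[M] = 1, let Q := P.withDensity(M), let S := M⁻¹·1_{M>0}, and set m := P(M = 0). Then for every x ∈ ℝ and every α ∈ [0,1]: E_Q[(S − e^x)₊] + α·m = e^x · E_P[(e^{−x} − M)₊] + (α − 1)·m, and E_Q[(e^x − S)₊] = e^x · E_P[(M − e^{−x})₊]. That is, the α-collateralised Call price on S under Q equals e^x times the Put price on M under P at log-strike −x, plus (α−1)·m, and the Put price on S under Q equals e^x times the Call price on M under P at log-strike −x. -/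
open MeasureTheory Filter

/-!
Since `S = M⁻¹` and `dQ = M dP`, every `Q`-price of a payoff `f(S)` is the `P`-price of
`M f(M⁻¹)`. Moving the nonnegative factor `M` inside the positive part gives, on `{M > 0}`,
`M (M⁻¹ - K)₊ = (1 - K M)₊ = K (K⁻¹ - M)₊` and `M (K - M⁻¹)₊ = K (M - K⁻¹)₊`. On `{M = 0}` the
put identity still holds (both sides vanish), while the call identity is off by `K K⁻¹ = 1`;
integrating that unit gives the defect `m = P(M = 0)`.
-/

namespace DualityOptionPrices

open Set

section PositivePart

variable {m K : ℝ}

theorem mul_max_inv_sub_eq (hm : 0 ≤ m) (hK : 0 < K) :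
    m * max (m⁻¹ - K) 0 = K * max (K⁻¹ - m) 0 - ({0} : Set ℝ).indicator 1 m := by
  rcases hm.eq_or_lt with rfl | hm
  · simp [hK.le, hK.ne']
  rw [mul_max_of_nonneg _ _ hm.le, mul_max_of_nonneg _ _ hK.le, mul_zero, mul_zero, mul_sub,
    mul_sub, mul_inv_cancel₀ hm.ne', mul_inv_cancel₀ hK.ne', mul_comm m K,
    indicator_of_notMem (s := {0}) hm.ne', sub_zero]

theorem mul_max_sub_inv_eq (hm : 0 ≤ m) (hK : 0 < K) :
    m * max (K - m⁻¹) 0 = K * max (m - K⁻¹) 0 := by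
  rcases hm.eq_or_lt with rfl | hm
  · simp [hK.le]
  rw [mul_max_of_nonneg _ _ hm.le, mul_max_of_nonneg _ _ hK.le, mul_zero, mul_zero, mul_sub,
    mul_sub, mul_inv_cancel₀ hm.ne', mul_inv_cancel₀ hK.ne', mul_comm m K]

end PositivePart

section WithDensity

variable {Ω : Type*} [MeasurableSpace Ω] {μ : Measure Ω} {M : Ω → ℝ}

theorem integral_withDensity_ofReal (hM : Measurable M) (hM0 : ∀ ω, 0 ≤ M ω) (g : Ω → ℝ) :
    ∫ ω, g ω ∂μ.withDensity (fun ω => ENNReal.ofReal (M ω)) = ∫ ω, M ω * g ω ∂μ := by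
  rw [integral_withDensity_eq_integral_toReal_smul hM.ennreal_ofReal
    (ae_of_all _ fun _ => ENNReal.ofReal_lt_top)]
  simp only [ENNReal.toReal_ofReal (hM0 _), smul_eq_mul]

theorem integral_withDensity_max_sub_inv (hM : Measurable M) (hM0 : ∀ ω, 0 ≤ M ω)
    {K : ℝ} (hK : 0 < K) :
    ∫ ω, max (K - (M ω)⁻¹) 0 ∂μ.withDensity (fun ω => ENNReal.ofReal (M ω))
      = K * ∫ ω, max (M ω - K⁻¹) 0 ∂μ := by
  simp only [integral_withDensity_ofReal hM hM0, mul_max_sub_inv_eq (hM0 _) hK,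
    integral_const_mul]

theorem integral_withDensity_max_inv_sub [IsFiniteMeasure μ] (hM : Measurable M)
    (hM0 : ∀ ω, 0 ≤ M ω) {K : ℝ} (hK : 0 < K) :
    ∫ ω, max ((M ω)⁻¹ - K) 0 ∂μ.withDensity (fun ω => ENNReal.ofReal (M ω))
      = K * ∫ ω, max (K⁻¹ - M ω) 0 ∂μ - μ.real {ω | M ω = 0} := by
  have hzero : MeasurableSet {ω | M ω = 0} := hM (measurableSet_singleton 0)
  have hput : Integrable (fun ω => max (K⁻¹ - M ω) 0) μ := by
    refine (integrable_const K⁻¹).mono' (by fun_prop) (ae_of_all _ fun ω => ?_)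
    rw [Real.norm_of_nonneg (le_max_right _ _)]
    exact max_le (by linarith [hM0 ω]) (inv_nonneg.2 hK.le)
  have hind : ∀ ω, ({0} : Set ℝ).indicator 1 (M ω) = {ω | M ω = 0}.indicator (1 : Ω → ℝ) ω :=
    fun ω => by by_cases h : M ω = 0 <;> simp [h]
  have hdefect : Integrable ({ω | M ω = 0}.indicator (1 : Ω → ℝ)) μ :=
    (integrable_const 1).indicator hzero
  simp only [integral_withDensity_ofReal hM hM0, mul_max_inv_sub_eq (hM0 _) hK, hind]
  rw [integral_sub (hput.const_mul K) hdefect,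
    integral_const_mul, integral_indicator_one hzero]

end WithDensity

end DualityOptionPrices

open DualityOptionPrices in
theorem duality_option_prices_general
    {Ω : Type*} [MeasurableSpace Ω] (P : Measure Ω) [IsProbabilityMeasure P]
    (M : Ω → ℝ) (hMmeas : Measurable M) (hM0 : ∀ ω, 0 ≤ M ω)
    (S : Ω → ℝ) (hSdef : ∀ ω, S ω = if 0 < M ω then (M ω)⁻¹ else 0)
    (m : ℝ) (hm : m = (P {ω | M ω = 0}).toReal)
    (x : ℝ) (α : ℝ) :
    ((∫ ω, max (S ω - Real.exp x) 0 ∂(P.withDensity fun ω => ENNReal.ofReal (M ω)))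
        + α * m
      = Real.exp x * (∫ ω, max (Real.exp (-x) - M ω) 0 ∂P) + (α - 1) * m) ∧
    ((∫ ω, max (Real.exp x - S ω) 0 ∂(P.withDensity fun ω => ENNReal.ofReal (M ω)))
      = Real.exp x * ∫ ω, max (M ω - Real.exp (-x)) 0 ∂P) := by
  -- `0⁻¹ = 0` in Lean, so the case split in the definition of `S` is invisible.
  have hS : ∀ ω, S ω = (M ω)⁻¹ := fun ω => by
    rw [hSdef]; split_ifs with h
    · rfl
    · rw [le_antisymm (not_lt.1 h) (hM0 ω), inv_zero]
  simp only [hS, Real.exp_neg]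
  refine ⟨?_, integral_withDensity_max_sub_inv hMmeas hM0 (Real.exp_pos x)⟩
  rw [integral_withDensity_max_inv_sub hMmeas hM0 (Real.exp_pos x), hm, measureReal_def]
  ring

/-- duality relations between option prices: the `α`-collateralised Call
on `S` under `Q` equals `e^x` times the Put on `M` under `P` at log-strike `-x` plus
`(α-1)·m`, and the Put on `S` under `Q` equals `e^x` times the Call on `M` under `P`. -/
theorem duality_option_prices
    {Ω : Type*} [MeasurableSpace Ω] (P : Measure Ω) [IsProbabilityMeasure P]
    (M : Ω → ℝ) (hMmeas : Measurable M) (hM0 : ∀ ω, 0 ≤ M ω)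
    (hMint : Integrable M P) (hM1 : ∫ ω, M ω ∂P = 1)
    (S : Ω → ℝ) (hSdef : ∀ ω, S ω = if 0 < M ω then (M ω)⁻¹ else 0)
    (m : ℝ) (hm : m = (P {ω | M ω = 0}).toReal)
    (x : ℝ) (α : ℝ) (hα : α ∈ Set.Icc (0:ℝ) 1) :
    ((∫ ω, max (S ω - Real.exp x) 0 ∂(P.withDensity fun ω => ENNReal.ofReal (M ω)))
        + α * m
      = Real.exp x * (∫ ω, max (Real.exp (-x) - M ω) 0 ∂P) + (α - 1) * m) ∧
    ((∫ ω, max (Real.exp x - S ω) 0 ∂(P.withDensity fun ω => ENNReal.ofReal (M ω)))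
      = Real.exp x * ∫ ω, max (M ω - Real.exp (-x)) 0 ∂P) :=
  duality_option_prices_general P M hMmeas hM0 S hSdef m hm x α
end

section
/- Let (Ω, F, P) be a probability space, let M ≥ 0 be an integrable random variable with E_P[M] = 1, let Q := P.withDensity(M) and S := M⁻¹·1_{M>0}, and fix T > 0. Then for every x ∈ ℝ and σ ∈ [0,∞): P_BS(x,σ) = E_Q[(e^x − S)₊] holds if and only if C_BS(−x,σ) = E_P[(M − e^{−x})₊]. Consequently the Put-implied volatility of S under Q at log-strike x equals the (Call-)implied volatility of M under P at log-strike −x: I_S^p(x) = I_S^1(x) = I_M(−x) for all x ∈ ℝ. -/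
open MeasureTheory Filter

lemma PBS_eq_exp_mul_CBS (T x σ : ℝ) : PBS T x σ = Real.exp x * CBS T (-x) σ := by
  unfold PBS CBS
  by_cases h : σ = 0
  · subst h
    rw [if_pos rfl, if_pos rfl, mul_max_of_nonneg _ _ (Real.exp_pos x).le, mul_zero, mul_sub, mul_one,
      ← Real.exp_add, add_neg_cancel, Real.exp_zero]
  · rw [if_neg h, if_neg h]
    have h1 : dplus T (-x) σ = -(dminus T x σ) := by unfold dplus dminus; ring
    have h2 : dminus T (-x) σ = -(dplus T x σ) := by unfold dplus dminus; ring
    rw [h1, h2, mul_sub, ← mul_assoc, ← Real.exp_add, add_neg_cancel, Real.exp_zero, one_mul]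

/-- duality of implied volatilities: `σ` is a Put-implied volatility of
`S` under `Q` at log-strike `x` iff it is a Call-implied volatility of `M` under `P` at
log-strike `-x`; hence `I_S^p(x) = I_S^1(x) = I_M(-x)`. -/
theorem duality_implied_volatility
    {Ω : Type*} [MeasurableSpace Ω] (P : Measure Ω) [IsProbabilityMeasure P]
    (M : Ω → ℝ) (hMmeas : Measurable M) (hM0 : ∀ ω, 0 ≤ M ω)
    (hMint : Integrable M P) (hM1 : ∫ ω, M ω ∂P = 1)
    (S : Ω → ℝ) (hSdef : ∀ ω, S ω = if 0 < M ω then (M ω)⁻¹ else 0)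
    (T : ℝ) (hT : 0 < T) (x : ℝ) :
    ∀ σ : ℝ, 0 ≤ σ →
      (PBS T x σ
          = (∫ ω, max (Real.exp x - S ω) 0
              ∂(P.withDensity fun ω => ENNReal.ofReal (M ω))) ↔
        CBS T (-x) σ = ∫ ω, max (M ω - Real.exp (-x)) 0 ∂P) := by
  intro σ hσ
  have hQ : (∫ ω, max (Real.exp x - S ω) 0
      ∂(P.withDensity fun ω => ENNReal.ofReal (M ω)))
      = Real.exp x * ∫ ω, max (M ω - Real.exp (-x)) 0 ∂P := by
    have hd : (fun ω => ENNReal.ofReal (M ω))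
        = fun ω => ((M ω).toNNReal : ENNReal) := rfl
    rw [hd, integral_withDensity_eq_integral_smul
      (by exact hMmeas.real_toNNReal) (fun ω => max (Real.exp x - S ω) 0)]
    rw [← integral_const_mul]
    congr 1
    funext ω
    have hcoe : ((M ω).toNNReal : ℝ) = M ω := Real.coe_toNNReal _ (hM0 ω)
    rw [NNReal.smul_def, smul_eq_mul, hcoe]
    rcases lt_or_eq_of_le (hM0 ω) with hpos | hzero
    · have hS : S ω = (M ω)⁻¹ := by rw [hSdef ω, if_pos hpos]
      rw [hS, mul_max_of_nonneg _ _ (hM0 ω), mul_max_of_nonneg _ _ (Real.exp_pos x).le,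
        mul_zero, mul_zero]
      congr 1
      rw [mul_sub, mul_sub, mul_inv_cancel₀ (ne_of_gt hpos), ← Real.exp_add,
        add_neg_cancel, Real.exp_zero]
      ring
    · rw [← hzero, zero_mul]
      have : max (0 - Real.exp (-x)) 0 = 0 := by
        apply max_eq_right; simp [(Real.exp_pos (-x)).le]
      rw [this, mul_zero]
  rw [hQ, PBS_eq_exp_mul_CBS]
  constructor
  · exact fun h => mul_left_cancel₀ (Real.exp_ne_zero x) h
  · exact fun h => by rw [h]
end

section
/- Let S be a strictly positive (a.s.) integrable random variable on a probability space with m := 1 − E[S] ∈ (0,1), fix T > 0, and let I : ℝ → [0,∞) satisfy P_BS(x, I(x)) = E[(e^x − S)₊] for all x ∈ ℝ. Then the Put smile is not symmetric: there exists x ∈ ℝ with I(x) ≠ I(−x). -/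
open MeasureTheory Filter

lemma gauss_integrable :
    Integrable (fun t : ℝ => Real.exp (-t ^ 2 / 2) / Real.sqrt (2 * Real.pi)) := by
  have h := (integrable_exp_neg_mul_sq (show (0:ℝ) < 1/2 by norm_num)).div_const
    (Real.sqrt (2 * Real.pi))
  have he : ∀ t : ℝ, -t ^ 2 / 2 = -(1/2) * t ^ 2 := fun t => by ring
  simpa [he] using h

lemma gauss_total :
    (∫ t : ℝ, Real.exp (-t ^ 2 / 2) / Real.sqrt (2 * Real.pi)) = 1 := by
  have h := integral_gaussian (1/2 : ℝ)
  have he : ∀ t : ℝ, -t ^ 2 / 2 = -(1/2) * t ^ 2 := fun t => by ring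
  have h2 : (∫ t : ℝ, Real.exp (-t ^ 2 / 2)) = Real.sqrt (2 * Real.pi) := by
    simp_rw [he]
    rw [h]; norm_num [div_div_eq_mul_div]
    ring
  rw [integral_div, h2, div_self]
  positivity

lemma stdNormalCDF_neg (y : ℝ) : stdNormalCDF (-y) = 1 - stdNormalCDF y := by
  set g : ℝ → ℝ := fun t => Real.exp (-t ^ 2 / 2) / Real.sqrt (2 * Real.pi) with hg
  have hge : ∀ t, g (-t) = g t := fun t => by simp [hg, neg_sq]
  have h1 : stdNormalCDF (-y) = ∫ t in Set.Ioi y, g t := by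
    have h := integral_comp_neg_Iic (-y) g
    simp only [hge, neg_neg] at h
    exact h
  have h2 : (∫ t in Set.Iic y, g t) + (∫ t in Set.Ioi y, g t) = 1 := by
    rw [intervalIntegral.integral_Iic_add_Ioi gauss_integrable.integrableOn
      gauss_integrable.integrableOn]
    exact gauss_total
  have : stdNormalCDF y = ∫ t in Set.Iic y, g t := rfl
  linarith [h1, h2]

lemma PBS_reflect (T x σ : ℝ) :
    PBS T (-x) σ = Real.exp (-x) * (PBS T x σ + 1) - 1 := by
  by_cases hσ : σ = 0
  · subst hσ
    rw [show PBS T (-x) 0 = max (Real.exp (-x) - 1) 0 from if_pos rfl,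
      show PBS T x 0 = max (Real.exp x - 1) 0 from if_pos rfl]
    rcases le_or_gt x 0 with hx | hx
    · have h1 : Real.exp x ≤ 1 := Real.exp_le_one_iff.mpr hx
      have h2 : 1 ≤ Real.exp (-x) := Real.one_le_exp_iff.mpr (by linarith)
      rw [max_eq_left (by linarith), max_eq_right (by linarith)]
      ring
    · have h1 : 1 ≤ Real.exp x := (Real.one_le_exp_iff).mpr hx.le
      have h2 : Real.exp (-x) ≤ 1 := Real.exp_le_one_iff.mpr (by linarith)
      rw [max_eq_right (by linarith), max_eq_left (by linarith)]
      have h3 : Real.exp (-x) * Real.exp x = 1 := by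
        rw [← Real.exp_add]; simp
      nlinarith
  · have hd1 : dplus T (-x) σ = -dminus T x σ := by
      simp [dplus, dminus]; ring
    have hd2 : dminus T (-x) σ = -dplus T x σ := by
      simp [dplus, dminus]; ring
    rw [PBS, PBS, if_neg hσ, if_neg hσ, hd1, hd2, neg_neg, neg_neg]
    rw [stdNormalCDF_neg (dplus T x σ), stdNormalCDF_neg (dminus T x σ)]
    have := Real.exp_neg x
    have hxpos := Real.exp_pos x
    rw [this]
    field_simp
    ring

/-- in a strictly positive strict local martingale model the Put-implied
volatility smile is not symmetric. -/
theorem put_smile_not_symmetric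
    {Ω : Type*} [MeasurableSpace Ω] (μ : Measure Ω) [IsProbabilityMeasure μ]
    (S : Ω → ℝ) (hSpos : ∀ᵐ ω ∂μ, 0 < S ω) (hSint : Integrable S μ)
    (m : ℝ) (hm : m = 1 - ∫ ω, S ω ∂μ) (hm0 : 0 < m) (hm1 : m < 1)
    (T : ℝ) (hT : 0 < T)
    (I : ℝ → ℝ) (hInonneg : ∀ x, 0 ≤ I x)
    (hI : ∀ x : ℝ, PBS T x (I x) = ∫ ω, max (Real.exp x - S ω) 0 ∂μ) :
    ∃ x : ℝ, I x ≠ I (-x) := by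
  by_contra h
  push_neg at h
  -- Put price function
  set P : ℝ → ℝ := fun x => ∫ ω, max (Real.exp x - S ω) 0 ∂μ with hP
  have hint : ∀ x : ℝ, Integrable (fun ω => max (Real.exp x - S ω) 0) μ := by
    intro x
    exact ((integrable_const (Real.exp x)).sub hSint).pos_part
  -- lower bound on P x
  have hPlb : ∀ x : ℝ, Real.exp x - 1 + m ≤ P x := by
    intro x
    have h1 : (∫ ω, (Real.exp x - S ω) ∂μ) ≤ P x := by
      apply integral_mono ((integrable_const (Real.exp x)).sub hSint) (hint x)
      intro ω; exact le_max_left _ _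
    have h2 : (∫ ω, (Real.exp x - S ω) ∂μ) = Real.exp x - ∫ ω, S ω ∂μ := by
      rw [integral_sub (integrable_const _) hSint]
      simp
    rw [h2] at h1
    linarith [h1, hm]
  -- symmetry consequence
  have hsym : ∀ x : ℝ, P (-x) = Real.exp (-x) * (P x + 1) - 1 := by
    intro x
    have e1 : P (-x) = PBS T (-x) (I (-x)) := (hI (-x)).symm
    rw [e1, ← h x, PBS_reflect, hI x]
  -- key inequality: ∫ max (1 - exp x * S) 0 ≥ m for all x
  have hkey : ∀ x : ℝ, m ≤ ∫ ω, max (1 - Real.exp x * S ω) 0 ∂μ := by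
    intro x
    have h1 : (∫ ω, max (1 - Real.exp x * S ω) 0 ∂μ) = Real.exp x * P (-x) := by
      rw [hP, ← integral_const_mul]
      congr 1
      ext ω
      rw [mul_max_of_nonneg _ _ (Real.exp_pos x).le, mul_zero, mul_sub,
        ← Real.exp_add]
      simp
    rw [h1, hsym x]
    have h2 := hPlb x
    have h3 : Real.exp x * Real.exp (-x) = 1 := by rw [← Real.exp_add]; simp
    have h4 := Real.exp_pos x
    nlinarith
  -- dominated convergence along n : ℕ
  have htend : Tendsto (fun n : ℕ => ∫ ω, max (1 - Real.exp n * S ω) 0 ∂μ)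
      atTop (nhds 0) := by
    have hmeas : ∀ n : ℕ, Integrable (fun ω => max (1 - Real.exp n * S ω) 0) μ :=
      fun n => ((integrable_const (1:ℝ)).sub (hSint.const_mul _)).pos_part
    have hconv := tendsto_integral_of_dominated_convergence (μ := μ)
      (F := fun n : ℕ => fun ω => max (1 - Real.exp n * S ω) 0)
      (f := fun _ => (0:ℝ)) (fun _ => (1 : ℝ))
      (fun n => (hmeas n).aestronglyMeasurable) (integrable_const 1) ?_ ?_
    · simpa using hconv
    · intro n
      filter_upwards [hSpos] with ω hω
      rw [Real.norm_eq_abs, abs_le]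
      constructor
      · have : (0:ℝ) ≤ max (1 - Real.exp n * S ω) 0 := le_max_right _ _
        linarith
      · apply max_le _ zero_le_one
        nlinarith [Real.exp_pos (n : ℝ)]
    · filter_upwards [hSpos] with ω hω
      have : ∀ᶠ n : ℕ in atTop, max (1 - Real.exp n * S ω) 0 = 0 := by
        have hlim : Tendsto (fun n : ℕ => Real.exp n * S ω) atTop atTop :=
          (Real.tendsto_exp_atTop.comp tendsto_natCast_atTop_atTop).atTop_mul_const hω
        filter_upwards [hlim.eventually_ge_atTop 1] with n hn
        exact max_eq_right (by linarith)
      exact Tendsto.congr' (by filter_upwards [this] with n hn; exact hn.symm)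
        tendsto_const_nhds
  have : m ≤ 0 := ge_of_tendsto htend (Eventually.of_forall fun n => hkey n)
  linarith
end
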